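/- Let U be an open subset of ℝ^n and h : U → ℝ a C² function. In the Lagerberg superform calculus, (d'd''h)^n = n! · det(∂²h/∂x_i∂x_j) · d'x_1 ∧ d''x_1 ∧ ... ∧ d'x_n ∧ d''x_n. -/
import Mathlib

/-- Coefficient representation of Lagerberg superforms on `ℝ^n`. -/
abbrev SForm (n : ℕ) := Finset (Fin n) → Finset (Fin n) → (Fin n → ℝ) → ℝ

noncomputable def insertSign {n : ℕ} (i : Fin n) (s : Finset (Fin n)) : ℝ :=
  (-1 : ℝ) ^ (s.filter fun j => j < i).card

noncomputable def pder {n : ℕ} (i : Fin n) (f : (Fin n → ℝ) → ℝ) (x : Fin n → ℝ) : ℝ :=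
  fderiv ℝ f x (Pi.single i 1)

noncomputable def dP {n : ℕ} (ω : SForm n) : SForm n := fun I J x =>
  ∑ i ∈ I, insertSign i (I.erase i) * pder i (ω (I.erase i) J) x

noncomputable def dPP {n : ℕ} (ω : SForm n) : SForm n := fun I J x =>
  (-1 : ℝ) ^ I.card * ∑ j ∈ J, insertSign j (J.erase j) * pder j (ω I (J.erase j)) x

noncomputable def shuffleSign {n : ℕ} (A B : Finset (Fin n)) : ℝ :=
  (-1 : ℝ) ^ (∑ a ∈ A, (B.filter fun b => b < a).card)

noncomputable def wedge {n : ℕ} (ω η : SForm n) : SForm n := fun K L x =>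
  ∑ I ∈ K.powerset, ∑ J ∈ L.powerset,
    (-1 : ℝ) ^ ((K \ I).card * J.card) * shuffleSign I (K \ I) * shuffleSign J (L \ J) *
      ω I J x * η (K \ I) (L \ J) x

/-- A function `h` regarded as a `(0,0)`-superform. -/
def zform {n : ℕ} (h : (Fin n → ℝ) → ℝ) : SForm n := fun I J x =>
  if I = ∅ ∧ J = ∅ then h x else 0

/-- Wedge powers of a superform. -/
noncomputable def wpow {n : ℕ} (ω : SForm n) : ℕ → SForm n
  | 0 => fun I J _ => if I = ∅ ∧ J = ∅ then 1 else 0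
  | k + 1 => wedge ω (wpow ω k)

namespace Statement12Aux

open Finset

variable {n : ℕ}

lemma pder_zero_fun (i : Fin n) (x : Fin n → ℝ) : pder i (fun _ => (0:ℝ)) x = 0 := by
  simp [pder]

lemma zform_of_ne (h : (Fin n → ℝ) → ℝ) {I J : Finset (Fin n)} (hIJ : ¬(I = ∅ ∧ J = ∅)) :
    zform h I J = fun _ => 0 := by
  funext x; simp [zform, hIJ]

lemma zform_empty (h : (Fin n → ℝ) → ℝ) : zform h ∅ ∅ = h := by
  funext x; simp [zform]

lemma dPP_zero (h : (Fin n → ℝ) → ℝ) {I J : Finset (Fin n)}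
    (hIJ : ¬(I = ∅ ∧ J.card = 1)) : dPP (zform h) I J = fun _ => 0 := by
  funext x
  simp only [dPP]
  have hz : ∀ j ∈ J, insertSign j (J.erase j) * pder j (zform h I (J.erase j)) x = 0 := by
    intro j hj
    have : zform h I (J.erase j) = fun _ => 0 := by
      apply zform_of_ne
      rintro ⟨hI, hJ⟩
      apply hIJ
      exact ⟨hI, by rw [← Finset.card_erase_add_one hj, hJ, Finset.card_empty]⟩
    rw [this, pder_zero_fun, mul_zero]
  rw [Finset.sum_congr rfl hz]
  simp

lemma dPP_sing (h : (Fin n → ℝ) → ℝ) (j : Fin n) :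
    dPP (zform h) ∅ {j} = fun x => pder j h x := by
  funext x
  simp [dPP, insertSign, zform_empty]

lemma omega_zero (h : (Fin n → ℝ) → ℝ) {I J : Finset (Fin n)}
    (hIJ : ¬(I.card = 1 ∧ J.card = 1)) (x : Fin n → ℝ) :
    dP (dPP (zform h)) I J x = 0 := by
  simp only [dP]
  apply Finset.sum_eq_zero
  intro i hi
  have hz : dPP (zform h) (I.erase i) J = fun _ => 0 := by
    apply dPP_zero
    rintro ⟨hI, hJ⟩
    apply hIJ
    exact ⟨by rw [← Finset.card_erase_add_one hi, hI, Finset.card_empty], hJ⟩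
  rw [hz, pder_zero_fun, mul_zero]

lemma omega_sing (h : (Fin n → ℝ) → ℝ) (i j : Fin n) (x : Fin n → ℝ) :
    dP (dPP (zform h)) {i} {j} x = pder i (fun y => pder j h y) x := by
  simp [dP, insertSign, dPP_sing]

lemma sum_powerset_sing {α : Type*} [DecidableEq α] (K : Finset α) (g : Finset α → ℝ)
    (h0 : ∀ I, I ⊆ K → I.card ≠ 1 → g I = 0) :
    ∑ I ∈ K.powerset, g I = ∑ i ∈ K, g {i} := by
  rw [← Finset.sum_filter_of_ne (p := fun I => I.card = 1) (fun I hI hne => by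
    by_contra hc; exact hne (h0 I (Finset.mem_powerset.mp hI) hc))]
  have himg : K.powerset.filter (fun I => I.card = 1) = K.image (fun i => ({i} : Finset α)) := by
    ext I
    simp only [Finset.mem_filter, Finset.mem_powerset, Finset.mem_image, Finset.card_eq_one]
    constructor
    · rintro ⟨hsub, i, rfl⟩
      exact ⟨i, hsub (Finset.mem_singleton_self i), rfl⟩
    · rintro ⟨i, hi, rfl⟩
      exact ⟨Finset.singleton_subset_iff.mpr hi, i, rfl⟩
  rw [himg, Finset.sum_image (fun a _ b _ hab => Finset.singleton_injective hab)]

lemma filter_lt_orderEmbOfFin {k : ℕ} (K : Finset (Fin n)) (hK : K.card = k) (p : Fin k) :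
    (K.filter (fun b => b < K.orderEmbOfFin hK p)).card = (p : ℕ) := by
  have himg : K.filter (fun b => b < K.orderEmbOfFin hK p)
      = (Finset.univ.filter (fun q : Fin k => q < p)).image (K.orderEmbOfFin hK) := by
    ext b
    simp only [Finset.mem_filter, Finset.mem_image, Finset.mem_univ, true_and]
    constructor
    · rintro ⟨hbK, hlt⟩
      obtain ⟨q, hq⟩ : ∃ q, K.orderEmbOfFin hK q = b := by
        have hr : b ∈ Set.range (K.orderEmbOfFin hK) := by
          rw [Finset.range_orderEmbOfFin]; exact hbK
        exact hr
      exact ⟨q, by rwa [← hq, (K.orderEmbOfFin hK).strictMono.lt_iff_lt] at hlt, hq⟩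
    · rintro ⟨q, hq, rfl⟩
      exact ⟨Finset.orderEmbOfFin_mem K hK q, (K.orderEmbOfFin hK).strictMono hq⟩
  rw [himg, Finset.card_image_of_injective _ (K.orderEmbOfFin hK).injective]
  have hI : Finset.univ.filter (fun q : Fin k => q < p) = Finset.Iio p := by ext q; simp
  rw [hI, Fin.card_Iio]

lemma orderEmbOfFin_erase {k : ℕ} (K : Finset (Fin n)) (hK : K.card = k + 1) (p : Fin (k+1))
    (h' : (K.erase (K.orderEmbOfFin hK p)).card = k) (q : Fin k) :
    (K.erase (K.orderEmbOfFin hK p)).orderEmbOfFin h' q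
      = K.orderEmbOfFin hK (p.succAbove q) := by
  have huniq := Finset.orderEmbOfFin_unique (s := K.erase (K.orderEmbOfFin hK p)) h'
    (f := fun q : Fin k => K.orderEmbOfFin hK (p.succAbove q))
    (fun q => Finset.mem_erase.mpr
      ⟨fun hc => Fin.succAbove_ne p q ((K.orderEmbOfFin hK).injective hc),
        Finset.orderEmbOfFin_mem K hK _⟩)
    ((K.orderEmbOfFin hK).strictMono.comp (Fin.strictMono_succAbove p))
  exact (congrFun huniq q).symm

lemma erase_filter_lt (K : Finset (Fin n)) (i : Fin n) :
    (K.erase i).filter (fun b => b < i) = K.filter (fun b => b < i) := by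
  ext b
  simp only [Finset.mem_filter, Finset.mem_erase]
  exact ⟨fun ⟨⟨_, hb⟩, hlt⟩ => ⟨hb, hlt⟩, fun ⟨hb, hlt⟩ => ⟨⟨ne_of_lt hlt, hb⟩, hlt⟩⟩

lemma sum_orderEmb {k : ℕ} (K : Finset (Fin n)) (hK : K.card = k) (f : Fin n → ℝ) :
    ∑ i ∈ K, f i = ∑ p : Fin k, f (K.orderEmbOfFin hK p) := by
  have himg : K = Finset.univ.image (K.orderEmbOfFin hK) := by
    ext b
    simp only [Finset.mem_image, Finset.mem_univ, true_and]
    constructor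
    · intro hb
      have hr : b ∈ Set.range (K.orderEmbOfFin hK) := by
        rw [Finset.range_orderEmbOfFin]; exact hb
      exact hr
    · rintro ⟨q, rfl⟩; exact Finset.orderEmbOfFin_mem K hK q
  conv_lhs => rw [himg]
  rw [Finset.sum_image (fun a _ b _ hab => (K.orderEmbOfFin hK).injective hab)]

lemma wpow_eq (ω : SForm n) (x : Fin n → ℝ) (a : Fin n → Fin n → ℝ)
    (hω0 : ∀ I J : Finset (Fin n), ¬(I.card = 1 ∧ J.card = 1) → ω I J x = 0)
    (hω1 : ∀ i j, ω {i} {j} x = a i j) :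
    ∀ (k : ℕ) (K L : Finset (Fin n)) (hK : K.card = k) (hL : L.card = k),
      wpow ω k K L x = (-1 : ℝ)^(k*(k-1)/2) * (Nat.factorial k : ℝ) *
        (Matrix.of fun p q : Fin k =>
          a (K.orderEmbOfFin hK p) (L.orderEmbOfFin hL q)).det := by
  intro k
  induction k with
  | zero =>
    intro K L hK hL
    obtain rfl : K = ∅ := Finset.card_eq_zero.mp hK
    obtain rfl : L = ∅ := Finset.card_eq_zero.mp hL
    simp [wpow, Matrix.det_fin_zero, Nat.factorial]
  | succ k ih =>
    intro K L hK hL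
    have hfact : wpow ω (k+1) K L x = wedge ω (wpow ω k) K L x := rfl
    rw [hfact]
    simp only [wedge]
    rw [sum_powerset_sing K _ (fun I hI hne => Finset.sum_eq_zero (fun J _ => by
      rw [hω0 I J (fun hc => hne hc.1)]; ring))]
    have hinner : ∀ i ∈ K,
        (∑ J ∈ L.powerset,
          (-1 : ℝ) ^ ((K \ {i}).card * J.card) * shuffleSign {i} (K \ {i}) *
            shuffleSign J (L \ J) * ω {i} J x * wpow ω k (K \ {i}) (L \ J) x)
        = ∑ j ∈ L,
          (-1 : ℝ) ^ ((K \ {i}).card * ({j} : Finset (Fin n)).card) *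
            shuffleSign {i} (K \ {i}) * shuffleSign {j} (L \ {j}) * ω {i} {j} x *
            wpow ω k (K \ {i}) (L \ {j}) x := by
      intro i hi
      exact sum_powerset_sing L _ (fun J hJ hne => by
        rw [hω0 {i} J (fun hc => hne hc.2)]; ring)
    rw [Finset.sum_congr rfl hinner]
    set B : Matrix (Fin (k+1)) (Fin (k+1)) ℝ :=
      Matrix.of fun p q : Fin (k+1) => a (K.orderEmbOfFin hK p) (L.orderEmbOfFin hL q) with hB
    rw [sum_orderEmb K hK]
    have hcong : ∀ p : Fin (k+1),
        (∑ j ∈ L,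
          (-1 : ℝ) ^ ((K \ {K.orderEmbOfFin hK p}).card * ({j} : Finset (Fin n)).card) *
            shuffleSign {K.orderEmbOfFin hK p} (K \ {K.orderEmbOfFin hK p}) *
            shuffleSign {j} (L \ {j}) * ω {K.orderEmbOfFin hK p} {j} x *
            wpow ω k (K \ {K.orderEmbOfFin hK p}) (L \ {j}) x)
        = ((-1:ℝ)^k * (-1:ℝ)^(k*(k-1)/2) * (Nat.factorial k : ℝ)) *
            ∑ q : Fin (k+1), (-1:ℝ)^((p:ℕ) + (q:ℕ)) * B p q *
              (B.submatrix p.succAbove q.succAbove).det := by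
      intro p
      rw [sum_orderEmb L hL, Finset.mul_sum]
      apply Finset.sum_congr rfl
      intro q _
      set i := K.orderEmbOfFin hK p with hidef
      set j := L.orderEmbOfFin hL q with hjdef
      have hiK : i ∈ K := Finset.orderEmbOfFin_mem K hK p
      have hjL : j ∈ L := Finset.orderEmbOfFin_mem L hL q
      rw [Finset.sdiff_singleton_eq_erase, Finset.sdiff_singleton_eq_erase]
      have hKe : (K.erase i).card = k := by
        rw [Finset.card_erase_of_mem hiK, hK]; omega
      have hLe : (L.erase j).card = k := by
        rw [Finset.card_erase_of_mem hjL, hL]; omega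
      rw [ih (K.erase i) (L.erase j) hKe hLe]
      have s1 : shuffleSign {i} (K.erase i) = (-1:ℝ)^(p:ℕ) := by
        rw [shuffleSign, Finset.sum_singleton, erase_filter_lt, hidef,
          filter_lt_orderEmbOfFin]
      have s2 : shuffleSign {j} (L.erase j) = (-1:ℝ)^(q:ℕ) := by
        rw [shuffleSign, Finset.sum_singleton, erase_filter_lt, hjdef,
          filter_lt_orderEmbOfFin]
      have hmin : (Matrix.of fun p' q' : Fin k =>
            a ((K.erase i).orderEmbOfFin hKe p') ((L.erase j).orderEmbOfFin hLe q'))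
          = B.submatrix p.succAbove q.succAbove := by
        ext p' q'
        rw [Matrix.submatrix_apply, hB]
        simp only [Matrix.of_apply]
        rw [hidef, hjdef] at *
        rw [orderEmbOfFin_erase K hK p hKe p', orderEmbOfFin_erase L hL q hLe q']
      rw [hmin, hKe, s1, s2, hω1, Finset.card_singleton, mul_one, pow_add]
      have hBpq : a i j = B p q := rfl
      rw [hBpq]
      ring
    rw [Finset.sum_congr rfl (fun p _ => hcong p), ← Finset.mul_sum]
    have hdet : ∀ p : Fin (k+1),
        (∑ q : Fin (k+1), (-1:ℝ)^((p:ℕ) + (q:ℕ)) * B p q *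
          (B.submatrix p.succAbove q.succAbove).det) = B.det :=
      fun p => (Matrix.det_succ_row B p).symm
    rw [Finset.sum_congr rfl (fun p _ => hdet p), Finset.sum_const, Finset.card_univ,
      Fintype.card_fin, nsmul_eq_mul]
    have hred : (k + 1) * ((k + 1) - 1) / 2 = k*(k-1)/2 + k := by
      rw [← Finset.sum_range_id (k+1), ← Finset.sum_range_id k, Finset.sum_range_succ]
    rw [hred, pow_add, Nat.factorial_succ]
    push_cast
    ring

end Statement12Aux

/-- For a C² function `h` on an open `U ⊆ ℝ^n`,
`(d'd''h)^n = n! · det (∂²h/∂x_i∂x_j) · d'x_1 ∧ d''x_1 ∧ ... ∧ d'x_n ∧ d''x_n`.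
In the sorted coefficient basis `d'x_{1..n} ∧ d''x_{1..n}`, the interleaved volume form
`d'x_1 ∧ d''x_1 ∧ ... ∧ d'x_n ∧ d''x_n` carries the reordering sign `(−1)^{n(n−1)/2}`. -/
theorem statement12 {n : ℕ} (U : Set (Fin n → ℝ)) (hU : IsOpen U)
    (h : (Fin n → ℝ) → ℝ) (hh : ContDiffOn ℝ 2 h U) :
    ∀ x ∈ U,
      wpow (dP (dPP (zform h))) n Finset.univ Finset.univ x =
        (-1 : ℝ) ^ (n * (n - 1) / 2) * (Nat.factorial n : ℝ) *
          (Matrix.of fun i j : Fin n => pder i (fun y => pder j h y) x).det := by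
  intro x hx
  have huniv : (Finset.univ : Finset (Fin n)).card = n := by simp
  rw [Statement12Aux.wpow_eq (dP (dPP (zform h))) x
    (fun i j => pder i (fun y => pder j h y) x)
    (fun I J hIJ => Statement12Aux.omega_zero h hIJ x)
    (fun i j => Statement12Aux.omega_sing h i j x) n _ _ huniv huniv]
  have hid : ∀ p : Fin n, (Finset.univ : Finset (Fin n)).orderEmbOfFin huniv p = p := by
    have huniq := Finset.orderEmbOfFin_unique (s := (Finset.univ : Finset (Fin n))) huniv
      (f := fun p : Fin n => p) (fun p => Finset.mem_univ p) strictMono_id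
    intro p
    exact (congrFun huniq p).symm
  congr 1
  congr 1
  ext p q
  simp [hid]
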